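/- The number of complete Gessel words of length 2n with exactly one 1 and one 1bar, in which the 1 occurs before the 1bar, equals (2n-1) * binomial(2n-2, n-1). -/

import Mathlib

/-- The alphabet of Gessel words: letters `1`, `2`, `1̄`, `2̄`. -/
inductive GLetter | one | two | onebar | twobar
deriving DecidableEq

instance : Fintype GLetter where
  elems := {.one, .two, .onebar, .twobar}
  complete := by intro x; cases x <;> simp

open Classical

/-- Number of occurrences of the letter `x` among the first `k` letters of `w`. -/
noncomputable def cnt (m : ℕ) (w : Fin m → GLetter) (x : GLetter) (k : ℕ) : ℕ :=
  (Finset.univ.filter (fun i : Fin m => (i : ℕ) < k ∧ w i = x)).card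

/-- Gessel word condition: every prefix has `N₂ ≥ N_{2̄}` and `N₁+N₂ ≥ N_{1̄}+N_{2̄}`. -/
def IsGessel (m : ℕ) (w : Fin m → GLetter) : Prop :=
  ∀ k ≤ m, cnt m w .twobar k ≤ cnt m w .two k ∧
    cnt m w .onebar k + cnt m w .twobar k ≤ cnt m w .one k + cnt m w .two k

/-- Complete: equally many occurrences of each letter and its bar. -/
def IsCompleteGW (m : ℕ) (w : Fin m → GLetter) : Prop :=
  cnt m w .one m = cnt m w .onebar m ∧ cnt m w .two m = cnt m w .twobar m

/-!
Deleting the single `1` and `1̄` from such a word leaves a word in `2, 2̄`. Because the `1`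
precedes the `1̄`, every prefix has `N₁ ≥ N_{1̄}`, so the second Gessel inequality follows from
the first, and the first holds for all prefixes of the word exactly when it holds for all prefixes
of the remaining word. Hence the words are in bijection with pairs (two positions out of `2n`,
a Dyck word of semilength `n - 1`), giving `C(2n, 2) · C_{n-1} = (2n - 1) · C(2n-2, n-1)`.
-/

open Finset DyckStep

theorem List.count_ofFn {α : Type*} [DecidableEq α] {m : ℕ} (u : Fin m → α) (x : α) :
    (List.ofFn u).count x = #{i | u i = x} := by
  rw [← Multiset.coe_count, ← Fin.univ_val_map, Multiset.count_map, Finset.card_def,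
    Finset.filter_val]
  simp only [eq_comm]

lemma cnt_eq_count_take (m : ℕ) (w : Fin m → GLetter) (x : GLetter) (k : ℕ) :
    cnt m w x k = ((List.ofFn w).take k).count x := by
  wlog hk : k ≤ m generalizing k
  · have hcnt : cnt m w x k = cnt m w x m := by
      unfold cnt; congr 1; ext i
      simp only [mem_filter, mem_univ, true_and]
      exact and_congr_left' ⟨fun _ => i.isLt, fun _ => by omega⟩
    rw [hcnt, this m le_rfl, List.take_of_length_le (by simp),
      List.take_of_length_le (by simp; omega)]
  rw [← Fin.ofFn_take_eq_take_ofFn hk, List.count_ofFn, cnt, ← card_map (Fin.castLEEmb hk)]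
  congr 1; ext i
  simp only [mem_filter, mem_univ, true_and, mem_map, Fin.castLEEmb_apply]
  constructor
  · rintro ⟨hik, rfl⟩; exact ⟨⟨i, hik⟩, rfl, rfl⟩
  · rintro ⟨j, hj, rfl⟩; exact ⟨j.isLt, hj⟩

def IsTwoBallot (m : ℕ) (v : Fin m → GLetter) : Prop :=
  ∀ k ≤ m, cnt m v .twobar k ≤ cnt m v .two k

def IsTwoDyck (m : ℕ) (v : Fin m → GLetter) : Prop :=
  (∀ t, v t = .two ∨ v t = .twobar) ∧ IsTwoBallot m v ∧ cnt m v .two m = cnt m v .twobar m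

def DyckStep.toGLetter : DyckStep → GLetter
  | U => .two
  | D => .twobar

lemma DyckStep.toGLetter_injective : Function.Injective DyckStep.toGLetter := by
  intro s t h; cases s <;> cases t <;> first | rfl | cases h

lemma isTwoDyck_iff_of_ofFn_eq_map {m : ℕ} {v : Fin m → GLetter} {l : List DyckStep}
    (h : List.ofFn v = l.map toGLetter) :
    IsTwoDyck m v ↔ (∀ k, (l.take k).count D ≤ (l.take k).count U) ∧ l.count U = l.count D := by
  have hlen : l.length = m := by simpa using (congrArg List.length h).symm
  have hcnt (s : DyckStep) (k : ℕ) : cnt m v s.toGLetter k = (l.take k).count s := by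
    rw [cnt_eq_count_take, h, ← List.map_take,
      List.count_map_of_injective _ _ toGLetter_injective]
  have hletters (t : Fin m) : v t = .two ∨ v t = .twobar := by
    have hmem : v t ∈ l.map toGLetter := h ▸ List.mem_ofFn.mpr ⟨t, rfl⟩
    obtain ⟨s, -, hs⟩ := List.mem_map.mp hmem
    cases s <;> simp [← hs, toGLetter]
  change (∀ t, _) ∧ (∀ k ≤ m, cnt m v D.toGLetter k ≤ cnt m v U.toGLetter k) ∧
    cnt m v U.toGLetter m = cnt m v D.toGLetter m ↔ _
  simp only [hletters, implies_true, true_and, hcnt, ← hlen, List.take_length]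
  refine and_congr_left' ⟨fun hb k => ?_, fun hb k _ => hb k⟩
  rw [List.take_eq_take_min]; exact hb _ (min_le_right _ _)

lemma card_isTwoDyck (m : ℕ) : #{v : Fin (2 * m) → GLetter | IsTwoDyck (2 * m) v} = catalan m := by
  rw [← DyckWord.card_dyckWord_semilength_eq_catalan, ← card_univ]
  let word (p : DyckWord) : Fin (2 * m) → GLetter := fun t => (p.toList.getD t U).toGLetter
  have hword (p : {p : DyckWord // p.semilength = m}) :
      List.ofFn (word p) = p.1.toList.map toGLetter := by
    have hlen : p.1.toList.length = 2 * m := by rw [← p.1.two_mul_semilength_eq_length, p.2]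
    apply List.ext_getElem (by simp [hlen])
    intro k _ _
    simp [word, hlen]
  symm
  refine card_bij (fun p _ => word p) (fun p _ => ?_) (fun p _ q _ hpq => ?_) (fun v hv => ?_)
  · rw [mem_filter, isTwoDyck_iff_of_ofFn_eq_map (hword p)]
    exact ⟨mem_univ _, p.1.count_D_le_count_U, p.1.count_U_eq_count_D⟩
  · have hmap := hword p
    rw [hpq, hword q] at hmap
    exact Subtype.ext (DyckWord.ext (List.map_injective_iff.mpr toGLetter_injective hmap).symm)
  · have hv := (mem_filter.mp hv).2
    let u (t : Fin (2 * m)) : DyckStep := if v t = .two then U else D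
    have hvu : List.ofFn v = (List.ofFn u).map toGLetter := by
      rw [List.map_ofFn]; congr; funext t
      rcases hv.1 t with ht | ht <;> simp [u, ht, toGLetter]
    obtain ⟨hballot, hbalanced⟩ := (isTwoDyck_iff_of_ofFn_eq_map hvu).mp hv
    let p : DyckWord := ⟨List.ofFn u, hbalanced, hballot⟩
    have hp : p.semilength = m := by
      have h2 : 2 * p.semilength = 2 * m := p.two_mul_semilength_eq_length.trans List.length_ofFn
      omega
    refine ⟨⟨p, hp⟩, mem_univ _, List.ofFn_injective ?_⟩
    rw [hword ⟨p, hp⟩, hvu]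

lemma Fin.val_succAbove_lt_iff {m : ℕ} (p : Fin (m + 1)) (t : Fin m) (k : ℕ) :
    (p.succAbove t : ℕ) < k ↔ (t : ℕ) < k - if (p : ℕ) < k then 1 else 0 := by
  rcases lt_or_ge t.castSucc p with h | h
  · rw [Fin.succAbove_of_castSucc_lt p t h]
    simp only [Fin.lt_def, Fin.val_castSucc] at h ⊢
    split_ifs <;> omega
  · rw [Fin.succAbove_of_le_castSucc p t h]
    simp only [Fin.le_def, Fin.val_castSucc, Fin.val_succ] at h ⊢
    split_ifs <;> omega

lemma cnt_insertNth {m : ℕ} (p : Fin (m + 1)) (x : GLetter) (v : Fin m → GLetter) (y : GLetter)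
    (k : ℕ) :
    cnt (m + 1) (Fin.insertNth p x v) y k =
      cnt m v y (k - if (p : ℕ) < k then 1 else 0) + if (p : ℕ) < k ∧ x = y then 1 else 0 := by
  simp only [cnt, card_filter, Fin.sum_univ_succAbove _ p, Fin.insertNth_apply_same,
    Fin.insertNth_apply_succAbove, Fin.val_succAbove_lt_iff]
  ring

lemma cnt_eq_zero_of_forall_ne {m : ℕ} {v : Fin m → GLetter} {x : GLetter} (hv : ∀ t, v t ≠ x)
    (k : ℕ) : cnt m v x k = 0 := by
  simp [cnt, hv]

lemma forall_le_succ_sub_ite_iff {m p : ℕ} (hp : p ≤ m) {P : ℕ → Prop} :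
    (∀ k ≤ m + 1, P (k - if p < k then 1 else 0)) ↔ ∀ k ≤ m, P k := by
  refine ⟨fun h k hk => ?_, fun h k hk => h _ (by split_ifs <;> omega)⟩
  rcases le_or_gt k p with hkp | hpk
  · simpa [hkp.not_gt] using h k (by omega)
  · simpa [show p < k + 1 by omega] using h (k + 1) (by omega)

lemma isTwoBallot_insertNth_iff {m : ℕ} (p : Fin (m + 1)) {x : GLetter} (hx : x ≠ .two)
    (hx' : x ≠ .twobar) (v : Fin m → GLetter) :
    IsTwoBallot (m + 1) (Fin.insertNth p x v) ↔ IsTwoBallot m v := by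
  simp only [IsTwoBallot, cnt_insertNth, hx, hx', and_false, if_false, add_zero]
  exact forall_le_succ_sub_ite_iff (P := fun k => cnt m v .twobar k ≤ cnt m v .two k)
    (Nat.lt_succ_iff.mp p.isLt)

lemma isGessel_iff_isTwoBallot {m : ℕ} {w : Fin m → GLetter}
    (h : ∀ k ≤ m, cnt m w .onebar k ≤ cnt m w .one k) : IsGessel m w ↔ IsTwoBallot m w :=
  ⟨fun hw k hk => (hw k hk).1, fun hw k hk => ⟨hw k hk, add_le_add (h k hk) (hw k hk)⟩⟩

lemma Fin.insertNth_apply_eq_iff {α : Type*} {m : ℕ} {p : Fin (m + 1)} {x : α} {v : Fin m → α}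
    (hv : ∀ t, v t ≠ x) (l : Fin (m + 1)) :
    (Fin.insertNth p x v : Fin (m + 1) → α) l = x ↔ l = p := by
  rcases p.eq_self_or_eq_succAbove l with rfl | ⟨t, rfl⟩
  · simp
  · simp [hv, Fin.succAbove_ne]

lemma Fin.insertNth_inj_of_forall_ne {α : Type*} {m : ℕ} {p p' : Fin (m + 1)} {x : α}
    {v v' : Fin m → α} (hv' : ∀ t, v' t ≠ x)
    (h : (Fin.insertNth p x v : Fin (m + 1) → α) = Fin.insertNth p' x v') : p = p' ∧ v = v' := by
  obtain rfl : p = p' := by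
    rw [← Fin.insertNth_apply_eq_iff hv', ← h, Fin.insertNth_apply_same]
  exact ⟨rfl, (Fin.insertNth_inj.mp h).2⟩

def IsOneBeforeOnebarGW (m : ℕ) (w : Fin m → GLetter) : Prop :=
  IsGessel m w ∧ IsCompleteGW m w ∧ cnt m w .one m = 1 ∧ cnt m w .onebar m = 1 ∧
    ∃ i j : Fin m, i < j ∧ w i = .one ∧ w j = .onebar

/-- `a` indexes the word before the `1̄` is inserted at `b`; when `a.castSucc < b` the `1` ends up
at position `a.castSucc`. -/
def insertOneOnebar {M : ℕ} (a : Fin (M + 1)) (b : Fin (M + 2)) (v : Fin M → GLetter) :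
    Fin (M + 2) → GLetter :=
  Fin.insertNth b .onebar (Fin.insertNth a .one v)

lemma eq_of_cnt_eq_one {m : ℕ} {w : Fin m → GLetter} {x : GLetter} (h : cnt m w x m = 1)
    {i j : Fin m} (hi : w i = x) (hj : w j = x) : i = j :=
  card_le_one.mp h.le i (by simp [hi]) j (by simp [hj])

section insertOneOnebar

variable {M : ℕ} {a : Fin (M + 1)} {b : Fin (M + 2)} {v : Fin M → GLetter}

lemma insertOneOnebar_injective {a' : Fin (M + 1)} {b' : Fin (M + 2)} {v' : Fin M → GLetter}
    (hv' : ∀ t, v' t = .two ∨ v' t = .twobar)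
    (h : insertOneOnebar a b v = insertOneOnebar a' b' v') : a = a' ∧ b = b' ∧ v = v' := by
  have hone (t) : v' t ≠ .one := by rcases hv' t with h | h <;> simp [h]
  have honebar (t) : v' t ≠ .onebar := by rcases hv' t with h | h <;> simp [h]
  have hinner (l) : (Fin.insertNth a' .one v' : Fin (M + 1) → GLetter) l ≠ .onebar := by
    rcases a'.eq_self_or_eq_succAbove l with rfl | ⟨t, rfl⟩ <;> simp [honebar]
  obtain ⟨rfl, h_inner⟩ := Fin.insertNth_inj_of_forall_ne hinner h
  obtain ⟨rfl, rfl⟩ := Fin.insertNth_inj_of_forall_ne hone h_inner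
  exact ⟨rfl, rfl, rfl⟩

lemma isOneBeforeOnebarGW_insertOneOnebar_iff (hab : a.castSucc < b)
    (hv : ∀ t, v t = .two ∨ v t = .twobar) :
    IsOneBeforeOnebarGW (M + 2) (insertOneOnebar a b v) ↔ IsTwoDyck M v := by
  have hne (t) : v t ≠ .one ∧ v t ≠ .onebar := by rcases hv t with h | h <;> simp [h]
  have hone := cnt_eq_zero_of_forall_ne fun t => (hne t).1
  have honebar := cnt_eq_zero_of_forall_ne fun t => (hne t).2
  have hab' : (a : ℕ) < b := hab
  have hpos : ∃ i j : Fin (M + 2), i < j ∧ insertOneOnebar a b v i = .one ∧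
      insertOneOnebar a b v j = .onebar := by
    refine ⟨a.castSucc, b, hab, ?_, Fin.insertNth_apply_same _ _ _⟩
    rw [insertOneOnebar, ← Fin.succAbove_of_castSucc_lt b a hab, Fin.insertNth_apply_succAbove,
      Fin.insertNth_apply_same]
  have ha : (a : ℕ) ≤ M := Nat.lt_succ_iff.mp a.isLt
  simp only [IsOneBeforeOnebarGW, IsTwoDyck, IsCompleteGW, hpos, and_true, hv, implies_true,
    true_and]
  rw [isGessel_iff_isTwoBallot, insertOneOnebar, isTwoBallot_insertNth_iff _ (by simp) (by simp),
    isTwoBallot_insertNth_iff _ (by simp) (by simp)]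
  · simp [cnt_insertNth, hone, honebar, ha]
  · intro k _
    simp only [insertOneOnebar, cnt_insertNth, hone, honebar, reduceCtorEq, and_true, and_false,
      if_false, zero_add, add_zero]
    split_ifs <;> omega

lemma exists_eq_insertOneOnebar {w : Fin (M + 2) → GLetter} (hw : IsOneBeforeOnebarGW (M + 2) w) :
    ∃ a b v, a.castSucc < b ∧ (∀ t, v t = .two ∨ v t = .twobar) ∧ w = insertOneOnebar a b v := by
  obtain ⟨-, -, h1, h1b, i, j, hij, hi, hj⟩ := hw
  obtain ⟨a, rfl⟩ := Fin.exists_castSucc_eq.mpr (Fin.ne_last_of_lt hij)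
  have hsucc : j.succAbove a = a.castSucc := Fin.succAbove_of_castSucc_lt j a hij
  refine ⟨a, j, Fin.removeNth a (Fin.removeNth j w), hij, fun t => ?_, ?_⟩
  · have hl1 : j.succAbove (a.succAbove t) ≠ a.castSucc :=
      hsucc ▸ Fin.succAbove_right_injective.ne (a.succAbove_ne t)
    have hl2 : j.succAbove (a.succAbove t) ≠ j := j.succAbove_ne _
    change w _ = .two ∨ w _ = .twobar
    cases hwl : w (j.succAbove (a.succAbove t)) with
    | one => exact absurd (eq_of_cnt_eq_one h1 hwl hi) hl1
    | onebar => exact absurd (eq_of_cnt_eq_one h1b hwl hj) hl2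
    | two => exact Or.inl rfl
    | twobar => exact Or.inr rfl
  · rw [insertOneOnebar, Fin.eq_insertNth_iff, Fin.eq_insertNth_iff]
    exact ⟨hj, by rw [Fin.removeNth_apply, hsucc, hi], rfl⟩

end insertOneOnebar

lemma card_filter_castSucc_lt (M : ℕ) :
    #{q : Fin (M + 1) × Fin (M + 2) | q.1.castSucc < q.2} = (M + 2).choose 2 := by
  have hfiber (b : Fin (M + 2)) : #{a : Fin (M + 1) | a.castSucc < b} = b := by
    rw [← Fin.card_Iio b, ← card_map Fin.castSuccEmb]
    congr 1; ext i
    simp only [mem_map, mem_filter, mem_univ, true_and, Fin.coe_castSuccEmb, mem_Iio]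
    constructor
    · rintro ⟨a, ha, rfl⟩; exact ha
    · intro hi
      obtain ⟨a, rfl⟩ := Fin.exists_castSucc_eq.mpr (Fin.ne_last_of_lt hi)
      exact ⟨a, hi, rfl⟩
  rw [card_filter, Fintype.sum_prod_type_right]
  simp_rw [← card_filter, hfiber]
  rw [Fin.sum_univ_eq_sum_range (fun i => i), sum_range_id, Nat.choose_two_right]

lemma card_isOneBeforeOnebarGW (M : ℕ) :
    #{w : Fin (M + 2) → GLetter | IsOneBeforeOnebarGW (M + 2) w} =
      (M + 2).choose 2 * #{v : Fin M → GLetter | IsTwoDyck M v} := by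
  rw [← card_filter_castSucc_lt, ← card_product]
  symm
  refine card_bij (fun q _ => insertOneOnebar q.1.1 q.1.2 q.2) (fun q hq => ?_)
    (fun q hq q' hq' h => ?_) (fun w hw => ?_)
  · simp only [mem_product, mem_filter, mem_univ, true_and] at hq ⊢
    exact (isOneBeforeOnebarGW_insertOneOnebar_iff hq.1 hq.2.1).mpr hq.2
  · simp only [mem_product, mem_filter, mem_univ, true_and] at hq'
    obtain ⟨ha, hb, hv⟩ := insertOneOnebar_injective hq'.2.1 h
    exact Prod.ext (Prod.ext ha hb) hv
  · obtain ⟨a, b, v, hab, hv, rfl⟩ := exists_eq_insertOneOnebar (mem_filter.mp hw).2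
    refine ⟨((a, b), v), ?_, rfl⟩
    simp only [mem_product, mem_filter, mem_univ, true_and]
    exact ⟨hab, (isOneBeforeOnebarGW_insertOneOnebar_iff hab hv).mp (mem_filter.mp hw).2⟩

/-- The number of complete Gessel words of length `2n` with exactly one `1` and one `1̄`,
in which the `1` occurs before the `1̄`, is `(2n-1) * C(2n-2, n-1)`. -/
theorem gessel_one_before_onebar (n : ℕ) (hn : 1 ≤ n) :
    ((Finset.univ : Finset (Fin (2 * n) → GLetter)).filter
      (fun w => IsGessel (2 * n) w ∧ IsCompleteGW (2 * n) w ∧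
        cnt (2 * n) w .one (2 * n) = 1 ∧ cnt (2 * n) w .onebar (2 * n) = 1 ∧
        ∃ i j : Fin (2 * n), i < j ∧ w i = .one ∧ w j = .onebar)).card
    = (2 * n - 1) * Nat.choose (2 * n - 2) (n - 1) := by
  obtain ⟨m, rfl⟩ : ∃ m, n = m + 1 := ⟨n - 1, by omega⟩
  rw [show 2 * (m + 1) = 2 * m + 2 by ring, ← Finset.filter_congr_decidable]
  change #{w : Fin (2 * m + 2) → GLetter | IsOneBeforeOnebarGW (2 * m + 2) w} = _
  rw [card_isOneBeforeOnebarGW, card_isTwoDyck, Nat.choose_two_right,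
    show 2 * m + 2 - 1 = 2 * m + 1 by omega, show 2 * m + 2 - 2 = 2 * m by omega,
    Nat.add_sub_cancel, show (2 * m + 2) * (2 * m + 1) = (m + 1) * (2 * m + 1) * 2 by ring,
    Nat.mul_div_cancel _ two_pos, ← Nat.centralBinom_eq_two_mul_choose,
    ← succ_mul_catalan_eq_centralBinom]
  ring
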